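/- arXiv:1112.5421 — 2 statements merged into one kernel-verified Lean document; each statement's English description precedes it below -/
import Mathlib

section
/- For every G-semiorder P, the partial orientation O_P = {(u,v) : {u,v} ∈ E and u < v in P} is a G-semiorientation, and O_P is the unique G-semiorientation compatible with P. -/
namespace Soap

variable {V : Type*} {W : Type*}

/-- A partial orientation of `G`: a relation `O` such that `O u v` implies `{u,v}` is an
edge and the reverse pair is not in `O`. -/
def IsPartialOrientation (G : SimpleGraph V) (O : V → V → Prop) : Prop :=
  ∀ u v, O u v → G.Adj u v ∧ ¬ O v u

/-- The edge `{u,v}` of `G` is blank for the partial orientation `O`. -/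
def IsBlank (G : SimpleGraph V) (O : V → V → Prop) (u v : V) : Prop :=
  G.Adj u v ∧ ¬ O u v ∧ ¬ O v u

/-- A `G`-semiorientation: a partial orientation such that every potential cycle
(a cycle of `G`, here traversed as `c : ZMod n → V`, none of whose edges is oriented
against the traversal) has strictly more blank edges than oriented edges. -/
def IsSemiorientation (G : SimpleGraph V) (O : V → V → Prop) : Prop :=
  IsPartialOrientation G O ∧
  ∀ (n : ℕ) (c : ZMod n → V), 3 ≤ n → Function.Injective c →
    (∀ i, G.Adj (c i) (c (i + 1))) →
    (∀ i, ¬ O (c (i + 1)) (c i)) →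
    {i : ZMod n | O (c i) (c (i + 1))}.ncard <
      {i : ZMod n | IsBlank G O (c i) (c (i + 1))}.ncard

/-- A semiorder (unit interval order) given by its strict order relation `lt`. -/
def IsSemiorder (lt : V → V → Prop) : Prop :=
  ∃ t : V → ℝ, ∀ u v, lt u v ↔ t u + 1 < t v

/-- Compatibility of a (semi)order `lt` and a partial orientation `O`:
for every edge `{u,v}`, `u < v` iff `(u,v) ∈ O`. -/
def Compatible (G : SimpleGraph V) (lt : V → V → Prop) (O : V → V → Prop) : Prop :=
  ∀ u v, G.Adj u v → (lt u v ↔ O u v)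

/-- Indegree of a vertex with respect to a partial orientation. -/
noncomputable def indeg (O : V → V → Prop) (v : V) : ℕ := {u | O u v}.ncard

/-- `n_P(v)`: the number of vertices `u` with `u < v` and `{u,v}` an edge of `G`. -/
noncomputable def nP (G : SimpleGraph V) (lt : V → V → Prop) (v : V) : ℕ :=
  {u | lt u v ∧ G.Adj u v}.ncard

/-- Degree of a vertex in a graph. -/
noncomputable def vdeg (H : SimpleGraph W) (v : W) : ℕ := {u | H.Adj v u}.ncard

/-- A configuration `c` on the graph `H` with sink `q` is superstable:
`c ≥ 0` off the sink, and no nonempty set `X` of nonsink vertices can be fired legally,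
i.e. `c - Δ̃·1_X ≥ 0` fails (coordinatewise off the sink), where
`(Δ̃·1_X)_v = deg(v)·1_X(v) - #{u ∈ X : u ∼ v}`. -/
def Superstable (H : SimpleGraph W) (q : W) (c : W → ℤ) : Prop :=
  (∀ v, v ≠ q → 0 ≤ c v) ∧
  ¬ ∃ X : Set W, X.Nonempty ∧ q ∉ X ∧
    ∀ v, v ≠ q →
      0 ≤ c v - X.indicator (fun u => (vdeg H u : ℤ)) v + ({u | u ∈ X ∧ H.Adj v u}.ncard : ℤ)

/-- `K(G)`: the graph `G` with a new vertex `none` adjoined, joined to every vertex of `G`. -/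
def KG (G : SimpleGraph V) : SimpleGraph (Option V) where
  Adj x y := x ≠ y ∧ ∀ u v, x = some u → y = some v → G.Adj u v
  symm := by
    constructor
    rintro x y ⟨hne, h⟩
    exact ⟨hne.symm, fun u v hu hv => (h v u hv hu).symm⟩
  loopless := by constructor; rintro x ⟨hne, -⟩; exact hne rfl

/-- A divisor `c : V → ℤ` on `G` is quasi-superstable if the configuration
`v ↦ c v + 1` on `K(G)` (with sink the new vertex) is superstable. -/
def QuasiSuperstable (G : SimpleGraph V) (c : V → ℤ) : Prop :=
  Superstable (KG G) none (fun x => x.elim 0 (fun v => c v + 1))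

/-- An acyclic orientation of `G`: a partial orientation in which every edge is
oriented and which contains no directed cycle. -/
def IsAcyclicOrientation (G : SimpleGraph V) (O : V → V → Prop) : Prop :=
  IsPartialOrientation G O ∧ (∀ u v, G.Adj u v → O u v ∨ O v u) ∧
  ¬ ∃ (n : ℕ) (c : ZMod n → V), 0 < n ∧ Function.Injective c ∧ ∀ i, O (c i) (c (i + 1))

/-- The union of the hyperplanes `x u - x v = 1` of the `G`-semiorder arrangement. -/
def hyperplanesUnion (G : SimpleGraph V) : Set (V → ℝ) :=
  {x | ∃ u v, G.Adj u v ∧ x u - x v = 1}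

/-- The regions of the `G`-semiorder arrangement: connected components of the
complement of the union of its hyperplanes. -/
def Regions (G : SimpleGraph V) : Set (Set (V → ℝ)) :=
  {r | ∃ x, x ∉ hyperplanesUnion G ∧ r = connectedComponentIn (hyperplanesUnion G)ᶜ x}

/-- The candidate region attached to a partial orientation `O`. -/
def rho (G : SimpleGraph V) (O : V → V → Prop) : Set (V → ℝ) :=
  {x | (∀ u v, O u v → x v - x u > 1) ∧ (∀ u v, IsBlank G O u v → |x u - x v| < 1)}

/-- `K(G)₀`: the graph `G` with an edge `{v, v₀}` added for each vertex `v ≠ v₀`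
not already adjacent to `v₀`. -/
def KG0 (G : SimpleGraph V) (v₀ : V) : SimpleGraph V where
  Adj u v := G.Adj u v ∨ (u ≠ v ∧ (u = v₀ ∨ v = v₀))
  symm := by
    constructor
    rintro u v (h | ⟨hne, h⟩)
    · exact Or.inl h.symm
    · exact Or.inr ⟨hne.symm, h.symm⟩
  loopless := by
    constructor
    rintro v (h | ⟨hne, -⟩)
    · exact (G.ne_of_adj h) rfl
    · exact hne rfl

/-- The union of the hyperplanes of the `(G,v₀)`-semiorder arrangement. -/
def hyperplanesUnion0 (G : SimpleGraph V) (v₀ : V) : Set ({v : V // v ≠ v₀} → ℝ) :=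
  {x | ∃ u v : {v : V // v ≠ v₀}, G.Adj u.1 v.1 ∧ x u - x v = 1}

/-- The regions of the `(G,v₀)`-semiorder arrangement. -/
def Regions0 (G : SimpleGraph V) (v₀ : V) : Set (Set ({v : V // v ≠ v₀} → ℝ)) :=
  {r | ∃ x, x ∉ hyperplanesUnion0 G v₀ ∧
    r = connectedComponentIn (hyperplanesUnion0 G v₀)ᶜ x}

/-- The candidate region attached to a partial orientation `O`, in the sink context. -/
def rho0 (G : SimpleGraph V) (v₀ : V) (O : V → V → Prop) :
    Set ({v : V // v ≠ v₀} → ℝ) :=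
  {x | (∀ u v : {v : V // v ≠ v₀}, O u.1 v.1 → x v - x u > 1) ∧
    (∀ u v : {v : V // v ≠ v₀}, IsBlank G O u.1 v.1 → |x u - x v| < 1)}

/-- For every `G`-semiorder `P`, the partial orientation
`O_P = {(u,v) : {u,v} ∈ E and u < v in P}` is a `G`-semiorientation, and it is the
unique `G`-semiorientation compatible with `P`. -/
theorem stmt0 {V : Type*} [Fintype V] (G : SimpleGraph V) (hconn : G.Connected)
    (lt : V → V → Prop) (hP : IsSemiorder lt) :
    IsSemiorientation G (fun u v => G.Adj u v ∧ lt u v) ∧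
    ∀ O : V → V → Prop, IsSemiorientation G O → Compatible G lt O →
      O = fun u v => G.Adj u v ∧ lt u v := by
  classical
  obtain ⟨t, ht⟩ := hP
  have hpo : IsPartialOrientation G (fun u v => G.Adj u v ∧ lt u v) := by
    rintro u v ⟨ha, hl⟩
    refine ⟨ha, fun h => ?_⟩
    have h1 := (ht u v).mp hl
    have h2 := (ht v u).mp h.2
    linarith
  constructor
  · refine ⟨hpo, ?_⟩
    intro n c hn hinj hadj hback
    haveI : NeZero n := ⟨by omega⟩
    set f : ZMod n → ℝ := fun i => t (c (i + 1)) - t (c i) with hf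
    have hsum : ∑ i : ZMod n, f i = 0 := by
      have h1 : ∑ i : ZMod n, t (c (i + 1)) = ∑ i : ZMod n, t (c i) :=
        Fintype.sum_equiv (Equiv.addRight 1) _ _ (fun i => rfl)
      simp [hf, Finset.sum_sub_distrib, h1]
    set p : ZMod n → Prop := fun i => lt (c i) (c (i + 1)) with hp
    set S : Finset (ZMod n) := Finset.univ.filter p with hS
    set B : Finset (ZMod n) := Finset.univ.filter (fun i => ¬ p i) with hB
    have hSeq : {i : ZMod n | (fun u v => G.Adj u v ∧ lt u v) (c i) (c (i + 1))} = ↑S := by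
      ext i
      simp only [Set.mem_setOf_eq, hS, Finset.coe_filter, Finset.mem_univ, true_and,
        Set.mem_setOf_eq, hp]
      exact ⟨fun h => h.2, fun h => ⟨hadj i, h⟩⟩
    have hBeq : {i : ZMod n | IsBlank G (fun u v => G.Adj u v ∧ lt u v) (c i) (c (i + 1))}
        = ↑B := by
      ext i
      simp only [Set.mem_setOf_eq, hB, Finset.coe_filter, Finset.mem_univ, true_and,
        Set.mem_setOf_eq, hp, IsBlank]
      constructor
      · rintro ⟨-, h2, -⟩ hl
        exact h2 ⟨hadj i, hl⟩
      · intro h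
        exact ⟨hadj i, fun h' => h h'.2, hback i⟩
    rw [hSeq, hBeq, Set.ncard_coe_finset, Set.ncard_coe_finset]
    have hfS : ∀ i ∈ S, (1 : ℝ) < f i := by
      intro i hi
      have hl : lt (c i) (c (i + 1)) := by
        simpa [hS, hp] using hi
      have := (ht _ _).mp hl
      simp only [hf]; linarith
    have hfB : ∀ i ∈ B, (-1 : ℝ) ≤ f i := by
      intro i hi
      have hnb := hback i
      have hnl : ¬ lt (c (i + 1)) (c i) := fun h => hnb ⟨(hadj i).symm, h⟩
      have := (ht (c (i + 1)) (c i)).not.mp hnl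
      simp only [hf]; linarith
    by_cases hSe : S.Nonempty
    · have h1 : (S.card : ℝ) < ∑ i ∈ S, f i := by
        calc (S.card : ℝ) = ∑ _i ∈ S, (1 : ℝ) := by simp
        _ < ∑ i ∈ S, f i := Finset.sum_lt_sum_of_nonempty hSe hfS
      have h2 : (-(B.card : ℝ)) ≤ ∑ i ∈ B, f i := by
        calc (-(B.card : ℝ)) = ∑ _i ∈ B, (-1 : ℝ) := by simp
        _ ≤ ∑ i ∈ B, f i := Finset.sum_le_sum hfB
      have h3 : ∑ i ∈ S, f i + ∑ i ∈ B, f i = 0 := by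
        rw [hS, hB, Finset.sum_filter_add_sum_filter_not]; exact hsum
      have : (S.card : ℝ) < (B.card : ℝ) := by linarith
      exact_mod_cast this
    · have hS0 : S.card = 0 := by
        simpa [Finset.card_eq_zero, Finset.nonempty_iff_ne_empty] using hSe
      have hBn : B = Finset.univ := by
        rw [hB]
        ext i
        simp only [Finset.mem_filter, Finset.mem_univ, true_and, iff_true]
        intro hpi
        exact hSe ⟨i, by simp [hS, hpi]⟩
      rw [hS0, hBn]
      simp only [Finset.card_univ, ZMod.card]
      omega
  · intro O hO hcomp
    funext u v
    apply propext
    constructor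
    · intro h
      have hadj := (hO.1 u v h).1
      exact ⟨hadj, (hcomp u v hadj).mpr h⟩
    · rintro ⟨hadj, hl⟩
      exact (hcomp u v hadj).mp hl

end Soap
end

section
/- For every G-semiorder P on the vertex set V of G, the divisor c defined by c(v) = n_P(v) - 1 for all v ∈ V is quasi-superstable; that is, the configuration v ↦ n_P(v) on K(G) is superstable. -/
namespace Soap

variable {V : Type*} {W : Type*}

/-- For every `G`-semiorder `P`, the divisor `v ↦ n_P(v) - 1` is quasi-superstable,
i.e. the configuration `v ↦ n_P(v)` on `K(G)` is superstable. -/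
theorem stmt5 {V : Type*} [Fintype V] (G : SimpleGraph V) (hconn : G.Connected)
    (lt : V → V → Prop) (hP : IsSemiorder lt) :
    QuasiSuperstable G (fun v => (nP G lt v : ℤ) - 1) := by
  classical
  obtain ⟨t, ht⟩ := hP
  constructor
  · rintro (_ | v) hv
    · exact absurd rfl hv
    · simp only [Option.elim]
      have : (0 : ℤ) ≤ (nP G lt v : ℤ) := Int.natCast_nonneg _
      linarith
  · rintro ⟨X, ⟨x0, hx0⟩, hq, hX⟩
    set X' : Set V := {u | some u ∈ X} with hX'def
    have hX'ne : X'.Nonempty := by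
      cases x0 with
      | none => exact absurd hx0 hq
      | some w => exact ⟨w, hx0⟩
    obtain ⟨w, hwX, hwmin⟩ := Set.exists_min_image X' t (Set.toFinite X') hX'ne
    have hwX : (some w : Option V) ∈ X := hwX
    have h := hX (some w) (by simp)
    set A : Set V := {u | lt u w ∧ G.Adj u w} with hAdef
    set B : Set (Option V) := {u | u ∈ X ∧ (KG G).Adj (some w) u} with hBdef
    set N : Set (Option V) := {u | (KG G).Adj (some w) u} with hNdef
    have hAB : Disjoint (some '' A) B := by
      rw [Set.disjoint_left]
      rintro _ ⟨u, ⟨hlt, _⟩, rfl⟩ ⟨huX, -⟩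
      have h1 : t u + 1 < t w := (ht u w).1 hlt
      have h2 : t w ≤ t u := hwmin u huX
      linarith
    have hsub : (some '' A) ∪ B ⊆ N := by
      rintro x (⟨u, ⟨_, hadj⟩, rfl⟩ | ⟨-, hadj⟩)
      · refine ⟨by simpa using (Ne.symm hadj.ne), ?_⟩
        rintro a b ha hb
        cases ha; cases hb
        exact hadj.symm
      · exact hadj
    have hnoneN : (none : Option V) ∈ N := by
      refine ⟨by simp, ?_⟩
      rintro a b ha hb
      cases hb
    have hnoneAB : (none : Option V) ∉ (some '' A) ∪ B := by
      rintro (⟨u, -, hu⟩ | ⟨hXn, -⟩)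
      · exact Option.some_ne_none u hu
      · exact hq hXn
    have hcard1 : ((some '' A) ∪ B).ncard = A.ncard + B.ncard := by
      rw [Set.ncard_union_eq hAB (Set.toFinite _) (Set.toFinite _),
        Set.ncard_image_of_injective A (Option.some_injective V)]
    have hcard2 : A.ncard + B.ncard + 1 ≤ N.ncard := by
      have hins : (insert (none : Option V) ((some '' A) ∪ B)).ncard
          = ((some '' A) ∪ B).ncard + 1 :=
        Set.ncard_insert_of_notMem hnoneAB (Set.toFinite _)
      have hsub2 : insert (none : Option V) ((some '' A) ∪ B) ⊆ N :=
        Set.insert_subset hnoneN hsub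
      have := Set.ncard_le_ncard hsub2 (Set.toFinite _)
      omega
    have hnP : nP G lt w = A.ncard := rfl
    have hvd : vdeg (KG G) (some w) = N.ncard := rfl
    rw [Set.indicator_of_mem hwX] at h
    simp only [Option.elim] at h
    rw [hnP, hvd] at h
    have : (A.ncard : ℤ) + B.ncard + 1 ≤ (N.ncard : ℤ) := by exact_mod_cast hcard2
    linarith

end Soap
end
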